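/- Let $m_1, m_2 > 2$ be integers and $m = m_1 + m_2$. Let $a_1, b_1, a_2, b_2 > 0$ satisfy $a_1^2 + b_1^2 + a_2^2 + b_2^2 = 1$, and set $\alpha_1 = \frac{a_1^2}{m_1 - 1}$, $\alpha_2 = b_1^2$, $\alpha_3 = \frac{a_2^2}{m_2 - 1}$, $\alpha_4 = b_2^2$ and $d = \frac{(m_1-1)^2}{a_1^2} + \frac{1}{b_1^2} + \frac{(m_2-1)^2}{a_2^2} + \frac{1}{b_2^2}$. Then the system $\alpha_k(d - 2m^2) + 2m - \frac{1}{\alpha_k} = 0$ for all $k \in \{1,2,3,4\}$ holds if and only if one of the following eight cases holds: (1) $\alpha_1 = \alpha_2 = \alpha_3 = \alpha_4 = \frac{1}{m}$; (2) $\alpha_1 = \alpha_2 = \frac{1}{2m_1}$ and $\alpha_3 = \alpha_4 = \frac{1}{2m_2}$; (3) $\alpha_1 = \alpha_3 = \frac{1}{2(m-2)}$ and $\alpha_2 = \alpha_4 = \frac{1}{4}$; (4) $\alpha_1 = \alpha_4 = \frac{1}{2m_1}$ and $\alpha_2 = \alpha_3 = \frac{1}{2m_2}$; (5) $\alpha_1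 = \alpha_2 = \alpha_3 = \frac{1}{2(m-1)}$ and $\alpha_4 = \frac{1}{2}$; (6) $\alpha_1 = \alpha_2 = \alpha_4 = \frac{1}{2(m_1+1)}$ and $\alpha_3 = \frac{1}{2(m_2-1)}$; (7) $\alpha_1 = \alpha_3 = \alpha_4 = \frac{1}{2(m-1)}$ and $\alpha_2 = \frac{1}{2}$; (8) $\alpha_2 = \alpha_3 = \alpha_4 = \frac{1}{2(m_2+1)}$ and $\alpha_1 = \frac{1}{2(m_1-1)}$. -/

import Mathlib

/-!
After multiplying by `α`, each equation of the system says that `α` is a root of the same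
quadratic `C x² + 2 m x - 1` with `C = d - 2 m²`, so the `α_k` take at most two values.
Two distinct roots `s, t` satisfy `C s t = -1`, hence (Vieta) `s + t = 2 m s t`. The constraint
`a₁² + b₁² + a₂² + b₂² = 1` reads `Σ w_k α_k = 1` with weights `w = (m₁ - 1, 1, m₂ - 1, 1)`
summing to `m`; if the indices taking the value `s` have total weight `W`, these two relations
force `s = 1/(2W)` and `t = 1/(2(m - W))`, while a single common value must be `1/m`. The eight
cases are the eight ways of splitting `{1, 2, 3, 4}` into the group of `α₁` and the rest. The
converse is a direct substitution, using `d = Σ w_k / α_k`.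
-/

section Quadratic

variable {C M s t x y z : ℝ}

theorem quadratic_of_mul_add_sub_inv_eq_zero (hx : x ≠ 0) (h : x * C + 2 * M - 1 / x = 0) :
    C * x ^ 2 + 2 * M * x - 1 = 0 := by
  have hinv : x * (1 / x) = 1 := by field_simp
  linear_combination x * h + hinv

theorem mul_mul_eq_neg_one_of_quadratic (hx : C * x ^ 2 + 2 * M * x - 1 = 0)
    (hy : C * y ^ 2 + 2 * M * y - 1 = 0) (hxy : x ≠ y) : C * x * y = -1 := by
  have h : (y - x) * (C * x * y + 1) = 0 := by linear_combination x * hy - y * hx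
  rcases mul_eq_zero.mp h with h | h
  · exact absurd (sub_eq_zero.mp h).symm hxy
  · linarith

theorem eq_of_quadratic_of_ne (hx : C * x ^ 2 + 2 * M * x - 1 = 0)
    (hy : C * y ^ 2 + 2 * M * y - 1 = 0) (hz : C * z ^ 2 + 2 * M * z - 1 = 0)
    (hxy : x ≠ y) (hxz : x ≠ z) : y = z := by
  have hxy' := mul_mul_eq_neg_one_of_quadratic hx hy hxy
  have hCx : C * x ≠ 0 := fun h => by simp [h] at hxy'
  exact mul_left_cancel₀ hCx (hxy'.trans (mul_mul_eq_neg_one_of_quadratic hx hz hxz).symm)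

theorem eq_one_div_of_quadratic_of_weighted_sum {W V : ℝ}
    (hs : C * s ^ 2 + 2 * M * s - 1 = 0) (ht : C * t ^ 2 + 2 * M * t - 1 = 0) (hst : s ≠ t)
    (hWV : W + V = M) (hsum : W * s + V * t = 1) :
    s = 1 / (2 * W) ∧ t = 1 / (2 * V) := by
  have hvieta : s + t = 2 * M * s * t := by
    linear_combination (-t) * hs + s * mul_mul_eq_neg_one_of_quadratic hs ht hst
  subst hWV
  have key : ((W + V) * s - 1) * (2 * W * s - 1) = 0 := by
    linear_combination (2 * (W + V) * s - 1) * hsum + V * hvieta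
  rcases mul_eq_zero.mp key with h | h
  · exact absurd (by linear_combination hvieta + 2 * t * h) hst
  · have hWs : 2 * W * s = 1 := by linarith
    have hVt : 2 * V * t = 1 := by linear_combination 2 * hsum - hWs
    exact ⟨eq_one_div_of_mul_eq_one_right hWs, eq_one_div_of_mul_eq_one_right hVt⟩

end Quadratic

section System

variable {m1 m2 d α1 α2 α3 α4 : ℝ}

def BiharmonicSystem (m1 m2 d α1 α2 α3 α4 : ℝ) : Prop :=
  α1 * (d - 2 * (m1 + m2) ^ 2) + 2 * (m1 + m2) - 1 / α1 = 0 ∧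
  α2 * (d - 2 * (m1 + m2) ^ 2) + 2 * (m1 + m2) - 1 / α2 = 0 ∧
  α3 * (d - 2 * (m1 + m2) ^ 2) + 2 * (m1 + m2) - 1 / α3 = 0 ∧
  α4 * (d - 2 * (m1 + m2) ^ 2) + 2 * (m1 + m2) - 1 / α4 = 0

def BiharmonicCases (m1 m2 α1 α2 α3 α4 : ℝ) : Prop :=
  (α1 = 1 / (m1 + m2) ∧ α2 = 1 / (m1 + m2) ∧ α3 = 1 / (m1 + m2) ∧ α4 = 1 / (m1 + m2)) ∨
  (α1 = 1 / (2 * m1) ∧ α2 = 1 / (2 * m1) ∧ α3 = 1 / (2 * m2) ∧ α4 = 1 / (2 * m2)) ∨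
  (α1 = 1 / (2 * (m1 + m2 - 2)) ∧ α3 = 1 / (2 * (m1 + m2 - 2)) ∧ α2 = 1 / 4 ∧ α4 = 1 / 4) ∨
  (α1 = 1 / (2 * m1) ∧ α4 = 1 / (2 * m1) ∧ α2 = 1 / (2 * m2) ∧ α3 = 1 / (2 * m2)) ∨
  (α1 = 1 / (2 * (m1 + m2 - 1)) ∧ α2 = 1 / (2 * (m1 + m2 - 1)) ∧
    α3 = 1 / (2 * (m1 + m2 - 1)) ∧ α4 = 1 / 2) ∨
  (α1 = 1 / (2 * (m1 + 1)) ∧ α2 = 1 / (2 * (m1 + 1)) ∧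
    α4 = 1 / (2 * (m1 + 1)) ∧ α3 = 1 / (2 * (m2 - 1))) ∨
  (α1 = 1 / (2 * (m1 + m2 - 1)) ∧ α3 = 1 / (2 * (m1 + m2 - 1)) ∧
    α4 = 1 / (2 * (m1 + m2 - 1)) ∧ α2 = 1 / 2) ∨
  (α2 = 1 / (2 * (m2 + 1)) ∧ α3 = 1 / (2 * (m2 + 1)) ∧
    α4 = 1 / (2 * (m2 + 1)) ∧ α1 = 1 / (2 * (m1 - 1)))

theorem biharmonicCases_of_quadratic {C : ℝ}
    (hS : (m1 - 1) * α1 + α2 + (m2 - 1) * α3 + α4 = 1)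
    (Q1 : C * α1 ^ 2 + 2 * (m1 + m2) * α1 - 1 = 0) (Q2 : C * α2 ^ 2 + 2 * (m1 + m2) * α2 - 1 = 0)
    (Q3 : C * α3 ^ 2 + 2 * (m1 + m2) * α3 - 1 = 0) (Q4 : C * α4 ^ 2 + 2 * (m1 + m2) * α4 - 1 = 0) :
    BiharmonicCases m1 m2 α1 α2 α3 α4 := by
  unfold BiharmonicCases
  by_cases h12 : α1 = α2 <;> by_cases h13 : α1 = α3 <;> by_cases h14 : α1 = α4
  · have hs : α1 = 1 / (m1 + m2) := eq_one_div_of_mul_eq_one_right <| by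
      linear_combination hS + h12 + (m2 - 1) * h13 + h14
    exact .inl ⟨hs, h12 ▸ hs, h13 ▸ hs, h14 ▸ hs⟩
  · obtain ⟨hs, ht⟩ := eq_one_div_of_quadratic_of_weighted_sum (W := m1 + m2 - 1) (V := 1)
      Q1 Q4 h14 (by ring) (by linear_combination hS + h12 + (m2 - 1) * h13)
    norm_num at ht
    exact .inr <| .inr <| .inr <| .inr <| .inl ⟨hs, h12 ▸ hs, h13 ▸ hs, ht⟩
  · obtain ⟨hs, ht⟩ := eq_one_div_of_quadratic_of_weighted_sum (W := m1 + 1) (V := m2 - 1)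
      Q1 Q3 h13 (by ring) (by linear_combination hS + h12 + h14)
    exact .inr <| .inr <| .inr <| .inr <| .inr <| .inl ⟨hs, h12 ▸ hs, h14 ▸ hs, ht⟩
  · have h34 := eq_of_quadratic_of_ne Q1 Q3 Q4 h13 h14
    obtain ⟨hs, ht⟩ := eq_one_div_of_quadratic_of_weighted_sum (W := m1) (V := m2)
      Q1 Q3 h13 (by ring) (by linear_combination hS + h12 + h34)
    exact .inr <| .inl ⟨hs, h12 ▸ hs, ht, h34 ▸ ht⟩
  · obtain ⟨hs, ht⟩ := eq_one_div_of_quadratic_of_weighted_sum (W := m1 + m2 - 1) (V := 1)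
      Q1 Q2 h12 (by ring) (by linear_combination hS + (m2 - 1) * h13 + h14)
    norm_num at ht
    exact .inr <| .inr <| .inr <| .inr <| .inr <| .inr <| .inl ⟨hs, h13 ▸ hs, h14 ▸ hs, ht⟩
  · have h24 := eq_of_quadratic_of_ne Q1 Q2 Q4 h12 h14
    obtain ⟨hs, ht⟩ := eq_one_div_of_quadratic_of_weighted_sum (W := m1 + m2 - 2) (V := 2)
      Q1 Q2 h12 (by ring) (by linear_combination hS + (m2 - 1) * h13 + h24)
    norm_num at ht
    exact .inr <| .inr <| .inl ⟨hs, h13 ▸ hs, ht, h24 ▸ ht⟩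
  · have h23 := eq_of_quadratic_of_ne Q1 Q2 Q3 h12 h13
    obtain ⟨hs, ht⟩ := eq_one_div_of_quadratic_of_weighted_sum (W := m1) (V := m2)
      Q1 Q2 h12 (by ring) (by linear_combination hS + h14 + (m2 - 1) * h23)
    exact .inr <| .inr <| .inr <| .inl ⟨hs, h14 ▸ hs, ht, h23 ▸ ht⟩
  · have h23 := eq_of_quadratic_of_ne Q1 Q2 Q3 h12 h13
    have h24 := eq_of_quadratic_of_ne Q1 Q2 Q4 h12 h14
    obtain ⟨hs, ht⟩ := eq_one_div_of_quadratic_of_weighted_sum (W := m1 - 1) (V := m2 + 1)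
      Q1 Q2 h12 (by ring) (by linear_combination hS + (m2 - 1) * h23 + h24)
    exact .inr <| .inr <| .inr <| .inr <| .inr <| .inr <| .inr ⟨ht, h23 ▸ ht, h24 ▸ ht, hs⟩

theorem biharmonicSystem_of_biharmonicCases (hm1 : 1 < m1) (hm2 : 1 < m2)
    (hd : d = (m1 - 1) / α1 + 1 / α2 + (m2 - 1) / α3 + 1 / α4)
    (h : BiharmonicCases m1 m2 α1 α2 α3 α4) : BiharmonicSystem m1 m2 d α1 α2 α3 α4 := by
  have : m1 - 1 ≠ 0 := by linarith
  have : m2 - 1 ≠ 0 := by linarith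
  have : m1 + m2 - 1 ≠ 0 := by linarith
  have : m1 + m2 - 2 ≠ 0 := by linarith
  have : m1 + 1 ≠ 0 := by linarith
  have : m2 + 1 ≠ 0 := by linarith
  have : m1 ≠ 0 := by linarith
  have : m2 ≠ 0 := by linarith
  have : m1 + m2 ≠ 0 := by linarith
  subst hd
  rcases h with ⟨rfl, rfl, rfl, rfl⟩ | ⟨rfl, rfl, rfl, rfl⟩ | ⟨rfl, rfl, rfl, rfl⟩ |
    ⟨rfl, rfl, rfl, rfl⟩ | ⟨rfl, rfl, rfl, rfl⟩ | ⟨rfl, rfl, rfl, rfl⟩ | ⟨rfl, rfl, rfl, rfl⟩ |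
    ⟨rfl, rfl, rfl, rfl⟩ <;>
  refine ⟨?_, ?_, ?_, ?_⟩ <;> field_simp <;> ring

end System

theorem biharmonic_product_system (m1 m2 : ℕ) (hm1 : 2 < m1) (hm2 : 2 < m2)
    (a1 b1 a2 b2 : ℝ) (ha1 : 0 < a1) (hb1 : 0 < b1) (ha2 : 0 < a2) (hb2 : 0 < b2)
    (hsum : a1 ^ 2 + b1 ^ 2 + a2 ^ 2 + b2 ^ 2 = 1)
    (α1 α2 α3 α4 d : ℝ)
    (hα1 : α1 = a1 ^ 2 / ((m1 : ℝ) - 1)) (hα2 : α2 = b1 ^ 2)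
    (hα3 : α3 = a2 ^ 2 / ((m2 : ℝ) - 1)) (hα4 : α4 = b2 ^ 2)
    (hd : d = ((m1 : ℝ) - 1) ^ 2 / a1 ^ 2 + 1 / b1 ^ 2 +
        ((m2 : ℝ) - 1) ^ 2 / a2 ^ 2 + 1 / b2 ^ 2) :
    (α1 * (d - 2 * ((m1 : ℝ) + m2) ^ 2) + 2 * ((m1 : ℝ) + m2) - 1 / α1 = 0 ∧
     α2 * (d - 2 * ((m1 : ℝ) + m2) ^ 2) + 2 * ((m1 : ℝ) + m2) - 1 / α2 = 0 ∧
     α3 * (d - 2 * ((m1 : ℝ) + m2) ^ 2) + 2 * ((m1 : ℝ) + m2) - 1 / α3 = 0 ∧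
     α4 * (d - 2 * ((m1 : ℝ) + m2) ^ 2) + 2 * ((m1 : ℝ) + m2) - 1 / α4 = 0) ↔
    ((α1 = 1 / ((m1 : ℝ) + m2) ∧ α2 = 1 / ((m1 : ℝ) + m2) ∧
        α3 = 1 / ((m1 : ℝ) + m2) ∧ α4 = 1 / ((m1 : ℝ) + m2)) ∨
     (α1 = 1 / (2 * (m1 : ℝ)) ∧ α2 = 1 / (2 * (m1 : ℝ)) ∧
        α3 = 1 / (2 * (m2 : ℝ)) ∧ α4 = 1 / (2 * (m2 : ℝ))) ∨
     (α1 = 1 / (2 * ((m1 : ℝ) + m2 - 2)) ∧ α3 = 1 / (2 * ((m1 : ℝ) + m2 - 2)) ∧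
        α2 = 1 / 4 ∧ α4 = 1 / 4) ∨
     (α1 = 1 / (2 * (m1 : ℝ)) ∧ α4 = 1 / (2 * (m1 : ℝ)) ∧
        α2 = 1 / (2 * (m2 : ℝ)) ∧ α3 = 1 / (2 * (m2 : ℝ))) ∨
     (α1 = 1 / (2 * ((m1 : ℝ) + m2 - 1)) ∧ α2 = 1 / (2 * ((m1 : ℝ) + m2 - 1)) ∧
        α3 = 1 / (2 * ((m1 : ℝ) + m2 - 1)) ∧ α4 = 1 / 2) ∨
     (α1 = 1 / (2 * ((m1 : ℝ) + 1)) ∧ α2 = 1 / (2 * ((m1 : ℝ) + 1)) ∧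
        α4 = 1 / (2 * ((m1 : ℝ) + 1)) ∧ α3 = 1 / (2 * ((m2 : ℝ) - 1))) ∨
     (α1 = 1 / (2 * ((m1 : ℝ) + m2 - 1)) ∧ α3 = 1 / (2 * ((m1 : ℝ) + m2 - 1)) ∧
        α4 = 1 / (2 * ((m1 : ℝ) + m2 - 1)) ∧ α2 = 1 / 2) ∨
     (α2 = 1 / (2 * ((m2 : ℝ) + 1)) ∧ α3 = 1 / (2 * ((m2 : ℝ) + 1)) ∧
        α4 = 1 / (2 * ((m2 : ℝ) + 1)) ∧ α1 = 1 / (2 * ((m1 : ℝ) - 1)))) := by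
  have hm1' : (1 : ℝ) < m1 := by exact_mod_cast hm1.trans' one_lt_two
  have hm2' : (1 : ℝ) < m2 := by exact_mod_cast hm2.trans' one_lt_two
  have hm1₀ : (m1 : ℝ) - 1 ≠ 0 := by linarith
  have hm2₀ : (m2 : ℝ) - 1 ≠ 0 := by linarith
  have hα1₀ : α1 ≠ 0 := hα1 ▸ div_ne_zero (by positivity) hm1₀
  have hα2₀ : α2 ≠ 0 := hα2 ▸ by positivity
  have hα3₀ : α3 ≠ 0 := hα3 ▸ div_ne_zero (by positivity) hm2₀
  have hα4₀ : α4 ≠ 0 := hα4 ▸ by positivity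
  have hA1 : a1 ^ 2 = ((m1 : ℝ) - 1) * α1 := by rw [hα1]; field_simp
  have hA2 : a2 ^ 2 = ((m2 : ℝ) - 1) * α3 := by rw [hα3]; field_simp
  have hS : ((m1 : ℝ) - 1) * α1 + α2 + ((m2 : ℝ) - 1) * α3 + α4 = 1 := by
    linear_combination hsum - hA1 - hA2 + hα2 + hα4
  have hD : d = ((m1 : ℝ) - 1) / α1 + 1 / α2 + ((m2 : ℝ) - 1) / α3 + 1 / α4 := by
    rw [hd, hA1, hA2, ← hα2, ← hα4]
    field_simp
  refine ⟨fun ⟨E1, E2, E3, E4⟩ => ?_, biharmonicSystem_of_biharmonicCases hm1' hm2' hD⟩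
  exact biharmonicCases_of_quadratic hS (quadratic_of_mul_add_sub_inv_eq_zero hα1₀ E1)
    (quadratic_of_mul_add_sub_inv_eq_zero hα2₀ E2) (quadratic_of_mul_add_sub_inv_eq_zero hα3₀ E3)
    (quadratic_of_mul_add_sub_inv_eq_zero hα4₀ E4)
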